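/- arXiv:2404.14350 — 2 statements merged into one kernel-verified Lean document; each statement's English description precedes it below -/
import Mathlib

section
/- For all n ∈ ℤ and all complex parameters α, ε₁, ε₂, the segment product function satisfies the reflection identity s_n^{ε₁,ε₂}(α) · s_{-n}^{ε₁,ε₂}(−α − ε₁ − ε₂) = (−1)^n. -/
/-- The triangle product `t_n^{ε₁,ε₂}(α)`: for `n > 0` the product of `α - i ε₁ - j ε₂`
over `i, j ≥ 0` with `i + j < n`; for `n < 0` the product of `α + i ε₁ + j ε₂` over
`i, j > 0` with `i + j ≤ -n`; and `t_0 = 1`. -/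
noncomputable def tFun (ε₁ ε₂ α : ℂ) (n : ℤ) : ℂ :=
  if 0 < n then
    ∏ i ∈ Finset.range n.toNat, ∏ j ∈ Finset.range (n.toNat - i),
      (α - (i : ℂ) * ε₁ - (j : ℂ) * ε₂)
  else
    ∏ i ∈ Finset.range (-n).toNat, ∏ j ∈ Finset.range ((-n).toNat - 1 - i),
      (α + ((i : ℂ) + 1) * ε₁ + ((j : ℂ) + 1) * ε₂)

/-- The segment product `s_n^{ε₁,ε₂}(α) = t_n^{ε₁,ε₂}(α) / t_{n-1}^{ε₁,ε₂}(α)`. -/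
noncomputable def sFun (ε₁ ε₂ α : ℂ) (n : ℤ) : ℂ :=
  tFun ε₁ ε₂ α n / tFun ε₁ ε₂ α (n - 1)

/-! Put `β = -α - ε₁ - ε₂`. Each factor `β + (i+1) ε₁ + (j+1) ε₂` of `t_{-m-1}(β)` equals
`-(α - i ε₁ - j ε₂)`, so `t_{-m-1}(β) = (-1)^(m(m+1)/2) t_m(α)`. Dividing this triangle
reflection at `m + 1` by the one at `m` gives the segment identity for `n = m + 1`, the two signs
differing by `(-1)^(m+1)`; the involution `α ↦ -α - ε₁ - ε₂` carries it over to `n < 0`. -/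

open Finset

section

variable (ε₁ ε₂ : ℂ)

theorem tFun_natCast (α : ℂ) (m : ℕ) :
    tFun ε₁ ε₂ α m = ∏ i ∈ range m, ∏ j ∈ range (m - i), (α - i * ε₁ - j * ε₂) := by
  rcases Nat.eq_zero_or_pos m with rfl | hm
  · simp [tFun]
  · simp [tFun, hm]

theorem tFun_neg_natCast_sub_one (α : ℂ) (m : ℕ) :
    tFun ε₁ ε₂ α (-m - 1) =
      ∏ i ∈ range (m + 1), ∏ j ∈ range (m - i), (α + (i + 1) * ε₁ + (j + 1) * ε₂) := by
  rw [tFun, if_neg (by omega), show (-(-(m : ℤ) - 1)).toNat = m + 1 by omega]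
  simp

theorem tFun_reflect (α : ℂ) (m : ℕ) :
    tFun ε₁ ε₂ (-α - ε₁ - ε₂) (-m - 1) = (-1) ^ (∑ i ∈ range (m + 1), i) * tFun ε₁ ε₂ α m := by
  have hfactor (i j : ℕ) :
      -α - ε₁ - ε₂ + (i + 1) * ε₁ + (j + 1) * ε₂ = -(α - i * ε₁ - j * ε₂) := by ring
  simp only [tFun_neg_natCast_sub_one, hfactor, prod_neg, prod_mul_distrib, prod_pow_eq_pow_sum,
    card_range]
  have hcount : ∑ i ∈ range (m + 1), (m - i) = ∑ i ∈ range (m + 1), i := by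
    simpa using sum_range_reflect (fun i ↦ i) (m + 1)
  rw [hcount, prod_range_succ, tFun_natCast]
  simp

theorem sFun_mul_sFun_reflect_natCast (n : ℕ) (α : ℂ)
    (h₁ : tFun ε₁ ε₂ α (n - 1) ≠ 0)
    (h₂ : tFun ε₁ ε₂ (-α - ε₁ - ε₂) (-n - 1) ≠ 0) :
    sFun ε₁ ε₂ α n * sFun ε₁ ε₂ (-α - ε₁ - ε₂) (-n) = (-1) ^ n := by
  rcases n with _ | m
  · simp [sFun, tFun]
  have hm : tFun ε₁ ε₂ α m ≠ 0 := by simpa using h₁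
  have hm1 : tFun ε₁ ε₂ α (m + 1 : ℕ) ≠ 0 := by
    rw [tFun_reflect] at h₂
    exact right_ne_zero_of_mul h₂
  have hsign : (-1 : ℂ) ^ (∑ i ∈ range (m + 2), i) =
      (-1) ^ (∑ i ∈ range (m + 1), i) * (-1) ^ (m + 1) := by
    rw [sum_range_succ, pow_add]
  rw [sFun, sFun, show (-(m + 1 : ℕ) : ℤ) = -m - 1 by push_cast; ring, tFun_reflect,
    show (-(m : ℤ) - 1 - 1) = -(m + 1 : ℕ) - 1 by push_cast; ring, tFun_reflect, hsign,
    show ((m + 1 : ℕ) : ℤ) - 1 = m by push_cast; ring]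
  field_simp
  rw [← pow_mul, pow_mul', neg_one_sq, one_pow]

end

/-- Reflection identity for the segment product:
`s_n^{ε₁,ε₂}(α) · s_{-n}^{ε₁,ε₂}(-α - ε₁ - ε₂) = (-1)^n`
(assuming the denominators defining the two segment products are nonzero). -/
theorem segment_reflection (n : ℤ) (α ε₁ ε₂ : ℂ)
    (h₁ : tFun ε₁ ε₂ α (n - 1) ≠ 0)
    (h₂ : tFun ε₁ ε₂ (-α - ε₁ - ε₂) (-n - 1) ≠ 0) :
    sFun ε₁ ε₂ α n * sFun ε₁ ε₂ (-α - ε₁ - ε₂) (-n) = (-1 : ℂ) ^ n := by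
  obtain ⟨m, rfl | rfl⟩ := Int.eq_nat_or_neg n
  · simpa using sFun_mul_sFun_reflect_natCast ε₁ ε₂ m α h₁ h₂
  · have hinv : -(-α - ε₁ - ε₂) - ε₁ - ε₂ = α := by ring
    rw [neg_neg] at h₂ ⊢
    have key := sFun_mul_sFun_reflect_natCast ε₁ ε₂ m (-α - ε₁ - ε₂) h₂ (by rwa [hinv])
    rw [hinv] at key
    rw [mul_comm, key, zpow_neg, zpow_natCast, ← inv_pow, inv_neg_one]
end

section
/- Let g(a₁,a₂,a₃) = Γ(a₃)Γ(a₂ − a₁)/(Γ(a₂)Γ(a₃ − a₁)), let Î(a) = (a₁ − a₃ + 1, a₂ − a₃ + 1, 2 − a₃), Ŝ(a) = (a₂, a₁, a₃). Then for all a ∈ ℂ³ and r ∈ ℤ³ avoiding poles of Gamma, the following two expressions coincide: g(Ŝa)·g(−a − r) / (g(ŜÎa)·g(Î(−a − r))) = g(a)·g(Ŝ(−a − r)) / (g(Îa)·g(ŜÎ(−a − r))). -/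
open Complex

/-- `g(a₁,a₂,a₃) = Γ(a₃)Γ(a₂-a₁)/(Γ(a₂)Γ(a₃-a₁))`. -/
noncomputable def gConn (a : ℂ × ℂ × ℂ) : ℂ :=
  Complex.Gamma a.2.2 * Complex.Gamma (a.2.1 - a.1) /
    (Complex.Gamma a.2.1 * Complex.Gamma (a.2.2 - a.1))

/-- `Î(a₁,a₂,a₃) = (a₁ - a₃ + 1, a₂ - a₃ + 1, 2 - a₃)`. -/
def Ihat (a : ℂ × ℂ × ℂ) : ℂ × ℂ × ℂ :=
  (a.1 - a.2.2 + 1, a.2.1 - a.2.2 + 1, 2 - a.2.2)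

/-- `Ŝ(a₁,a₂,a₃) = (a₂, a₁, a₃)`. -/
def Shat (a : ℂ × ℂ × ℂ) : ℂ × ℂ × ℂ :=
  (a.2.1, a.1, a.2.2)

/-!
Put `h(a) = g(a) / g(Îa)`. Since `Î` and `Ŝ` commute, the two sides are `h(Ŝa) h(b)` and
`h(a) h(Ŝb)` with `b = -a - r`. By the reflection formula `Γ(z)Γ(1-z) = π / sin(πz)`,
`h(a) sin(πa₁) sin(π(a₃-a₂))` equals `Γ(a₃)/Γ(2-a₃) · π² / (Γ(a₁)Γ(a₂)Γ(a₃-a₁)Γ(a₃-a₂))`,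
which is `Ŝ`-invariant. Hence `h(Ŝa)/h(a)` is a ratio of four sines, and this ratio is unchanged
under `a ↦ -a - r`: each sine only changes by a sign, and the signs cancel.
-/

open scoped Real

/-- Mathlib's `Gamma` vanishes at its poles, so this says that no Gamma factor of `gConn a`
sits at a pole. -/
def GConnPoleFree (a : ℂ × ℂ × ℂ) : Prop :=
  Gamma a.2.2 ≠ 0 ∧ Gamma (a.2.1 - a.1) ≠ 0 ∧ Gamma a.2.1 ≠ 0 ∧ Gamma (a.2.2 - a.1) ≠ 0

noncomputable def sinRatio (a : ℂ × ℂ × ℂ) : ℂ :=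
  sin (π * a.1) * sin (π * (a.2.2 - a.2.1)) / (sin (π * a.2.1) * sin (π * (a.2.2 - a.1)))

lemma Ihat_Shat (a : ℂ × ℂ × ℂ) : Ihat (Shat a) = Shat (Ihat a) := rfl

lemma sin_pi_mul_ne_zero_of_Gamma_ne_zero {z : ℂ} (h : Gamma z ≠ 0) (h' : Gamma (1 - z) ≠ 0) :
    sin (π * z) ≠ 0 := fun hs =>
  mul_ne_zero h h' (by rw [Gamma_mul_Gamma_one_sub, hs, div_zero])

lemma Gamma_one_sub_eq_div {z : ℂ} (h : Gamma z ≠ 0) :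
    Gamma (1 - z) = π / sin (π * z) / Gamma z := by
  rw [← Gamma_mul_Gamma_one_sub, mul_div_cancel_left₀ _ h]

lemma sinRatio_numerator_ne_zero (a : ℂ × ℂ × ℂ) (hSa : GConnPoleFree (Shat a))
    (hIa : GConnPoleFree (Ihat a)) : sin (π * a.1) * sin (π * (a.2.2 - a.2.1)) ≠ 0 := by
  obtain ⟨-, -, h₁, h₃₂⟩ := hSa
  obtain ⟨-, -, h₃₂', h₁'⟩ := hIa
  dsimp only [Ihat] at h₁' h₃₂'
  rw [show 2 - a.2.2 - (a.1 - a.2.2 + 1) = 1 - a.1 by ring] at h₁'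
  rw [show a.2.1 - a.2.2 + 1 = 1 - (a.2.2 - a.2.1) by ring] at h₃₂'
  exact mul_ne_zero (sin_pi_mul_ne_zero_of_Gamma_ne_zero h₁ h₁')
    (sin_pi_mul_ne_zero_of_Gamma_ne_zero h₃₂ h₃₂')

lemma gConn_div_gConn_Ihat (a : ℂ × ℂ × ℂ) (ha : GConnPoleFree a) (hSa : GConnPoleFree (Shat a))
    (hIa : GConnPoleFree (Ihat a)) :
    gConn a / gConn (Ihat a) = Gamma a.2.2 / Gamma (2 - a.2.2) * π ^ 2 /
      (Gamma a.1 * Gamma a.2.1 * Gamma (a.2.2 - a.1) * Gamma (a.2.2 - a.2.1)) /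
      (sin (π * a.1) * sin (π * (a.2.2 - a.2.1))) := by
  obtain ⟨hs₁, hs₃₂⟩ := mul_ne_zero_iff.1 (sinRatio_numerator_ne_zero a hSa hIa)
  dsimp only [Shat] at hSa
  obtain ⟨-, h₂₁, h₂, h₃₁⟩ := ha
  obtain ⟨-, -, h₁, h₃₂⟩ := hSa
  simp only [gConn, Ihat]
  rw [show a.2.1 - a.2.2 + 1 - (a.1 - a.2.2 + 1) = a.2.1 - a.1 by ring,
    show 2 - a.2.2 - (a.1 - a.2.2 + 1) = 1 - a.1 by ring,
    show a.2.1 - a.2.2 + 1 = 1 - (a.2.2 - a.2.1) by ring,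
    Gamma_one_sub_eq_div h₁, Gamma_one_sub_eq_div h₃₂]
  field_simp

lemma sin_pi_mul_neg_sub_intCast (z : ℂ) (k : ℤ) :
    sin (π * (-z - k)) = ((k + 1).negOnePow : ℂ) * sin (π * z) := by
  rw [show (π : ℂ) * (-z - k) = -(π * z) - k * π by ring, sin_antiperiodic.sub_int_mul_eq,
    sin_neg, Int.negOnePow_succ, Units.val_neg, Int.cast_neg, neg_mul, mul_neg]

lemma sinRatio_neg_sub_intCast (a : ℂ × ℂ × ℂ) (r : ℤ × ℤ × ℤ) :
    sinRatio (-a.1 - r.1, -a.2.1 - r.2.1, -a.2.2 - r.2.2) = sinRatio a := by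
  obtain ⟨a₁, a₂, a₃⟩ := a
  obtain ⟨r₁, r₂, r₃⟩ := r
  have shift (i j : ℂ) (m n : ℤ) : -i - m - (-j - n) = -(i - j) - ((m - n : ℤ) : ℂ) := by
    push_cast; ring
  have sign : (r₁ + 1).negOnePow * (r₃ - r₂ + 1).negOnePow =
      (r₂ + 1).negOnePow * (r₃ - r₁ + 1).negOnePow := by
    rw [← Int.negOnePow_add, ← Int.negOnePow_add, Int.negOnePow_eq_iff]
    exact ⟨r₁ - r₂, by ring⟩
  simp only [sinRatio]
  rw [shift, shift, sin_pi_mul_neg_sub_intCast, sin_pi_mul_neg_sub_intCast,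
    sin_pi_mul_neg_sub_intCast, sin_pi_mul_neg_sub_intCast,
    mul_mul_mul_comm ((r₁ + 1).negOnePow : ℂ), mul_mul_mul_comm ((r₂ + 1).negOnePow : ℂ),
    ← Int.cast_mul, ← Int.cast_mul, ← Units.val_mul, ← Units.val_mul, sign,
    mul_div_mul_left _ _ (by simp)]

lemma gConn_Shat_div_gConn_Ihat_Shat (a : ℂ × ℂ × ℂ) (ha : GConnPoleFree a)
    (hSa : GConnPoleFree (Shat a)) (hIa : GConnPoleFree (Ihat a))
    (hSIa : GConnPoleFree (Shat (Ihat a))) :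
    gConn (Shat a) / gConn (Ihat (Shat a)) = sinRatio a * (gConn a / gConn (Ihat a)) := by
  rw [gConn_div_gConn_Ihat a ha hSa hIa,
    gConn_div_gConn_Ihat (Shat a) hSa ha (Ihat_Shat a ▸ hSIa), sinRatio,
    div_mul_div_cancel₀' (sinRatio_numerator_ne_zero a hSa hIa)]
  simp only [Shat]
  ring

/-- Consistency of the two computations of the monodromy-cancellation coefficient:
for `a ∈ ℂ³`, `r ∈ ℤ³` avoiding poles of all the Gamma functions involved,
`g(Ŝa)g(-a-r)/(g(ŜÎa)g(Î(-a-r))) = g(a)g(Ŝ(-a-r))/(g(Îa)g(ŜÎ(-a-r)))`. -/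
theorem monodromy_coefficient_consistency (a : ℂ × ℂ × ℂ) (r : ℤ × ℤ × ℤ)
    (nar : ℂ × ℂ × ℂ)
    (hnar : nar = (-a.1 - (r.1 : ℂ), -a.2.1 - (r.2.1 : ℂ), -a.2.2 - (r.2.2 : ℂ)))
    (hgen : ∀ x ∈ [Shat a, nar, Shat (Ihat a), Ihat nar, a, Shat nar, Ihat a,
        Shat (Ihat nar)],
      Complex.Gamma x.2.2 ≠ 0 ∧ Complex.Gamma (x.2.1 - x.1) ≠ 0 ∧
      Complex.Gamma x.2.1 ≠ 0 ∧ Complex.Gamma (x.2.2 - x.1) ≠ 0) :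
    gConn (Shat a) * gConn nar / (gConn (Shat (Ihat a)) * gConn (Ihat nar)) =
      gConn a * gConn (Shat nar) / (gConn (Ihat a) * gConn (Shat (Ihat nar))) := by
  have hA := gConn_Shat_div_gConn_Ihat_Shat a (hgen _ (by simp)) (hgen _ (by simp))
    (hgen _ (by simp)) (hgen _ (by simp))
  have hN := gConn_Shat_div_gConn_Ihat_Shat nar (hgen _ (by simp)) (hgen _ (by simp))
    (hgen _ (by simp)) (hgen _ (by simp))
  rw [hnar, sinRatio_neg_sub_intCast, ← hnar] at hN
  rw [Ihat_Shat] at hA hN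
  calc gConn (Shat a) * gConn nar / (gConn (Shat (Ihat a)) * gConn (Ihat nar))
      = sinRatio a * (gConn a / gConn (Ihat a)) * (gConn nar / gConn (Ihat nar)) := by
        rw [mul_div_mul_comm, hA]
    _ = gConn a / gConn (Ihat a) * (sinRatio a * (gConn nar / gConn (Ihat nar))) := by ring
    _ = gConn a * gConn (Shat nar) / (gConn (Ihat a) * gConn (Shat (Ihat nar))) := by
        rw [← hN, mul_div_mul_comm]
end
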